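/- Two-point GP classification robustness bound: let k be translation invariant with positive-definite Gram matrices, θ₁ = k(x,x), θ_s = k(x_+,x_-), and suppose x_* satisfies k(x_+,x_*) > k(x_-,x_*) and 0 < k(x_+,x_*) < θ_s. Let μ = (k(x_+,x_*) − k(x_-,x_*))/(θ₁ − θ_s) and σ² the two-point predictive variance. Then the probability that the GP classifier (trained on {(x_+,+1),(x_-,−1)}) labels x_* as −1 equals Φ(−μ/σ) and is strictly less than (1/2)·exp(−μ²/(2σ²)). -/

import Mathlib

open MeasureTheory Real Matrix

noncomputable def stdGaussCDF (α : ℝ) : ℝ :=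
  (Real.sqrt (2 * Real.pi))⁻¹ * ∫ u in Set.Iic α, Real.exp (-u ^ 2 / 2)

lemma integral_Iic_comp_mul_add (f : ℝ → ℝ) (a b c : ℝ) (ha : 0 < a) :
    ∫ x in Set.Iic c, f (a * x + b) = a⁻¹ * ∫ u in Set.Iic (a * c + b), f u := by
  have he : MeasurableEmbedding (fun x : ℝ => a * x + b) :=
    (((Homeomorph.mulLeft₀ a ha.ne').trans (Homeomorph.addRight b))).measurableEmbedding
  have hcomp : (fun x : ℝ => a * x + b) = (fun y : ℝ => y + b) ∘ (fun x : ℝ => a * x) := rfl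
  have hmap : Measure.map (fun x : ℝ => a * x + b) volume
      = ENNReal.ofReal a⁻¹ • volume := by
    rw [hcomp, ← Measure.map_map (measurable_add_const b) (measurable_const_mul a),
      Real.map_volume_mul_left ha.ne', Measure.map_smul, map_add_right_eq_self,
      abs_of_pos (inv_pos.mpr ha)]
  have h1 := he.setIntegral_map (μ := volume) f (Set.Iic (a * c + b))
  have hpre : (fun x : ℝ => a * x + b) ⁻¹' Set.Iic (a * c + b) = Set.Iic c := by
    ext x
    simp only [Set.mem_preimage, Set.mem_Iic]
    constructor
    · intro h; nlinarith
    · intro h; nlinarith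
  rw [hmap, hpre] at h1
  rw [Measure.restrict_smul, integral_smul_measure] at h1
  rw [← h1, ENNReal.toReal_ofReal (inv_pos.mpr ha).le, smul_eq_mul]

lemma integral_Iic_zero_gauss : ∫ u in Set.Iic (0:ℝ), Real.exp (-u ^ 2 / 2)
    = Real.sqrt (2 * Real.pi) / 2 := by
  have h := integral_comp_neg_Ioi (0 : ℝ) (fun u => Real.exp (-u ^ 2 / 2))
  simp only [neg_zero] at h
  rw [← h]
  have : ∀ x : ℝ, Real.exp (-(-x) ^ 2 / 2) = Real.exp (-(1/2 : ℝ) * x ^ 2) := by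
    intro x; ring_nf
  simp_rw [this]
  rw [integral_gaussian_Ioi (1/2)]
  rw [show (Real.pi / (1/2 : ℝ)) = 2 * Real.pi by ring]

theorem two_point_gp_robustness_bound (θ₁ θs θr1 θr2 μ σsq : ℝ)
    (hPD : (Matrix.of ![![θ₁, θs], ![θs, θ₁]]).PosDef)
    (hgt : θr2 < θr1) (hr1pos : 0 < θr1) (hr1lt : θr1 < θs)
    (hμ : μ = (θr1 - θr2) / (θ₁ - θs))
    (hσ : σsq = θ₁ - (θ₁ * (θr1 ^ 2 + θr2 ^ 2) - 2 * θs * θr1 * θr2) / (θ₁ ^ 2 - θs ^ 2))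
    (hσpos : 0 < σsq) :
    (∫ x in Set.Iic (0 : ℝ),
        (Real.sqrt (2 * Real.pi * σsq))⁻¹ * Real.exp (-(x - μ) ^ 2 / (2 * σsq)))
      = stdGaussCDF (-(μ / Real.sqrt σsq)) ∧
    stdGaussCDF (-(μ / Real.sqrt σsq)) < (1 / 2) * Real.exp (-μ ^ 2 / (2 * σsq)) := by
  -- θ₁ - θs > 0 from positive definiteness
  have hts : θs < θ₁ := by
    have hx : (![1, -1] : Fin 2 → ℝ) ≠ 0 := by
      intro h
      have := congrFun h 0
      norm_num at this
    have h2 := hPD.dotProduct_mulVec_pos (x := (![1, -1] : Fin 2 → ℝ)) hx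
    simp [Matrix.mulVec, dotProduct, Fin.sum_univ_two, Matrix.of_apply] at h2
    nlinarith
  have hμpos : 0 < μ := by
    rw [hμ]; exact div_pos (by linarith) (by linarith)
  set σ : ℝ := Real.sqrt σsq with hσdef
  have hσ0 : 0 < σ := Real.sqrt_pos.mpr hσpos
  have hσsq : σ ^ 2 = σsq := Real.sq_sqrt hσpos.le
  set α : ℝ := -(μ / σ) with hα
  have hαneg : α < 0 := by
    rw [hα]; simp only [neg_neg, neg_lt, neg_zero]; positivity
  -- Part 1
  have part1 : (∫ x in Set.Iic (0 : ℝ),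
        (Real.sqrt (2 * Real.pi * σsq))⁻¹ * Real.exp (-(x - μ) ^ 2 / (2 * σsq)))
      = stdGaussCDF α := by
    rw [integral_const_mul]
    have hfun : ∀ x : ℝ, Real.exp (-(x - μ) ^ 2 / (2 * σsq))
        = (fun u => Real.exp (-u ^ 2 / 2)) (σ⁻¹ * x + -(μ / σ)) := by
      intro x
      simp only
      congr 1
      field_simp
      rw [← hσsq]
      ring
    simp_rw [hfun]
    rw [integral_Iic_comp_mul_add (fun u => Real.exp (-u ^ 2 / 2)) σ⁻¹ (-(μ/σ)) 0
      (inv_pos.mpr hσ0)]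
    rw [stdGaussCDF]
    have : σ⁻¹ * 0 + -(μ / σ) = α := by rw [hα]; ring
    rw [this, inv_inv]
    rw [show Real.sqrt (2 * Real.pi * σsq) = Real.sqrt (2 * Real.pi) * σ by
      rw [hσdef, ← Real.sqrt_mul (by positivity)]]
    rw [mul_inv]
    field_simp
  refine ⟨part1, ?_⟩
  -- Part 2
  have hchange : (∫ u in Set.Iic α, Real.exp (-u ^ 2 / 2))
      = ∫ t in Set.Iic (0:ℝ), Real.exp (-(t + α) ^ 2 / 2) := by
    have := integral_Iic_comp_mul_add (fun u => Real.exp (-u ^ 2 / 2)) 1 α 0 one_pos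
    simp only [one_mul, inv_one, zero_add] at this
    rw [this]
  have hkey : ∀ t : ℝ, Real.exp (-(t + α) ^ 2 / 2)
      = Real.exp (-α * t) * (Real.exp (-α^2/2) * Real.exp (-t ^ 2 / 2)) := by
    intro t
    rw [← Real.exp_add, ← Real.exp_add]
    congr 1; ring
  -- integrability
  have hint1 : IntegrableOn (fun t => Real.exp (-(t + α) ^ 2 / 2)) (Set.Iic (0:ℝ)) := by
    have : Integrable (fun t : ℝ => Real.exp (-(1/2 : ℝ) * (t + α) ^ 2)) := by
      have := (integrable_exp_neg_mul_sq (show (0:ℝ) < 1/2 by norm_num)).comp_add_right α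
      simpa using this
    apply Integrable.integrableOn
    convert this using 2 with t
    ring_nf
  have hint2 : IntegrableOn (fun t => Real.exp (-α^2/2) * Real.exp (-t ^ 2 / 2))
      (Set.Iic (0:ℝ)) := by
    apply Integrable.integrableOn
    apply Integrable.const_mul
    have := integrable_exp_neg_mul_sq (show (0:ℝ) < 1/2 by norm_num)
    convert this using 2 with t
    ring_nf
  -- strict inequality of integrals
  have hlt : (∫ t in Set.Iic (0:ℝ), Real.exp (-(t + α) ^ 2 / 2))
      < ∫ t in Set.Iic (0:ℝ), Real.exp (-α^2/2) * Real.exp (-t ^ 2 / 2) := by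
    have hsub : 0 < ∫ t in Set.Iic (0:ℝ),
        (Real.exp (-α^2/2) * Real.exp (-t ^ 2 / 2) - Real.exp (-(t + α) ^ 2 / 2)) := by
      rw [setIntegral_pos_iff_support_of_nonneg_ae]
      · -- 0 < volume (support ∩ Iic 0)
        have hsupp : Set.Iio (0:ℝ) ⊆ Function.support
            (fun t => Real.exp (-α^2/2) * Real.exp (-t ^ 2 / 2)
              - Real.exp (-(t + α) ^ 2 / 2)) ∩ Set.Iic 0 := by
          intro t ht
          constructor
          · simp only [Function.mem_support]
            have htneg : t < 0 := Set.mem_Iio.mp ht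
            have hX : 0 < Real.exp (-α^2/2) * Real.exp (-t ^ 2 / 2) := by positivity
            have hstrict : Real.exp (-(t + α) ^ 2 / 2)
                < Real.exp (-α^2/2) * Real.exp (-t ^ 2 / 2) := by
              rw [hkey t]
              have h1 : Real.exp (-α * t) < 1 := by
                rw [Real.exp_lt_one_iff]
                nlinarith
              calc Real.exp (-α * t) * (Real.exp (-α^2/2) * Real.exp (-t ^ 2 / 2))
                  < 1 * (Real.exp (-α^2/2) * Real.exp (-t ^ 2 / 2)) :=
                    mul_lt_mul_of_pos_right h1 hX
                _ = _ := one_mul _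
            intro h
            rw [sub_eq_zero] at h
            linarith
          · exact le_of_lt (Set.mem_Iio.mp ht)
        have : (0 : ENNReal) < volume (Set.Iio (0:ℝ)) := by simp
        calc (0 : ENNReal) < volume (Set.Iio (0:ℝ)) := this
          _ ≤ _ := measure_mono hsupp
      · -- nonneg a.e.
        filter_upwards [ae_restrict_mem measurableSet_Iic] with t ht
        simp only [Pi.zero_apply, sub_nonneg]
        rw [hkey t]
        have htle : t ≤ 0 := ht
        have h1 : Real.exp (-α * t) ≤ 1 := by
          rw [Real.exp_le_one_iff]
          nlinarith
        have hX : 0 ≤ Real.exp (-α^2/2) * Real.exp (-t ^ 2 / 2) := by positivity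
        exact mul_le_of_le_one_left hX h1
      · exact hint2.sub hint1
    have := integral_sub hint2 hint1
    rw [this] at hsub
    linarith
  have hIic := integral_Iic_zero_gauss
  rw [stdGaussCDF, hchange]
  calc (Real.sqrt (2 * Real.pi))⁻¹ * ∫ t in Set.Iic (0:ℝ), Real.exp (-(t + α) ^ 2 / 2)
      < (Real.sqrt (2 * Real.pi))⁻¹
          * ∫ t in Set.Iic (0:ℝ), Real.exp (-α^2/2) * Real.exp (-t ^ 2 / 2) := by
        apply mul_lt_mul_of_pos_left hlt
        positivity
    _ = (1/2) * Real.exp (-μ ^ 2 / (2 * σsq)) := by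
        rw [integral_const_mul, hIic]
        have hα2 : α ^ 2 = μ ^ 2 / σsq := by
          rw [hα, neg_sq, div_pow, hσsq]
        rw [show -α^2/2 = -μ^2/(2*σsq) by rw [hα2]; field_simp]
        have h2π : (0:ℝ) < Real.sqrt (2 * Real.pi) := by positivity
        field_simp
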